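/- Let μ, μ_old ∈ ℝ^d, Σ symmetric positive definite, ε > 0, and define ω as in the mean projection: ω = max(0, sqrt((μ − μ_old)ᵀΣ⁻¹(μ − μ_old)/ε) − 1) and μ̃ = (μ + ω μ_old)/(1 + ω). Then (μ̃ − μ_old)ᵀ Σ⁻¹ (μ̃ − μ_old) ≤ ε always holds, i.e., the projected mean always satisfies the trust region constraint. -/

import Mathlib

open Matrix

/-!
The projected mean lies on the segment from `μold` to `μ`, so its deviation from `μold` is
`(μ - μold) / (1 + ω)` and the Mahalanobis distance scales by `1 / (1 + ω)²`. If `μ` is already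
inside the trust region then `ω = 0`; otherwise `1 + ω = √(q / ε)` for the distance `q` of `μ`,
and the scaled distance is exactly `ε`.
-/

noncomputable def meanProjectionWeight (q ε : ℝ) : ℝ :=
  max 0 (Real.sqrt (q / ε) - 1)

lemma meanProjectionWeight_nonneg (q ε : ℝ) : 0 ≤ meanProjectionWeight q ε :=
  le_max_left _ _

lemma sq_one_div_one_add_meanProjectionWeight_mul_le {q ε : ℝ} (hε : 0 < ε) :
    (1 / (1 + meanProjectionWeight q ε)) ^ 2 * q ≤ ε := by
  unfold meanProjectionWeight
  rcases le_or_gt (Real.sqrt (q / ε)) 1 with hin | hout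
  · rw [max_eq_left (by linarith), add_zero, div_one, one_pow, one_mul]
    exact (div_le_one hε).mp (Real.sqrt_le_one.mp hin)
  · have hq : 0 < q / ε := by
      by_contra! h
      rw [Real.sqrt_eq_zero'.mpr h] at hout
      linarith
    rw [max_eq_right (by linarith), add_sub_cancel, div_pow, one_pow,
      Real.sq_sqrt hq.le, one_div_div]
    exact (div_mul_cancel₀ ε (div_pos_iff_of_pos_right hε |>.mp hq).ne').le

lemma one_div_one_add_smul_add_smul_sub {𝕜 E : Type*} [Field 𝕜] [AddCommGroup E]
    [Module 𝕜 E] {ω : 𝕜} (hω : 1 + ω ≠ 0) (x y : E) :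
    (1 / (1 + ω)) • (x + ω • y) - y = (1 / (1 + ω)) • (x - y) := by
  have hcoeff : 1 / (1 + ω) * ω = 1 - 1 / (1 + ω) := by field_simp; ring
  rw [smul_add, smul_sub, smul_smul, hcoeff, sub_smul, one_smul]
  abel

lemma smul_dotProduct_mulVec_smul {n R : Type*} [Fintype n] [CommRing R]
    (A : Matrix n n R) (c : R) (x : n → R) :
    (c • x) ⬝ᵥ (A *ᵥ (c • x)) = c ^ 2 * (x ⬝ᵥ (A *ᵥ x)) := by
  rw [mulVec_smul, smul_dotProduct, dotProduct_smul, smul_eq_mul, smul_eq_mul, ← mul_assoc, sq]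

theorem mean_projection_feasible_general {d : ℕ} (Sig : Matrix (Fin d) (Fin d) ℝ)
    (μ μold : Fin d → ℝ) (ε : ℝ) (hε : 0 < ε)
    (ω : ℝ)
    (hω : ω = max 0 (Real.sqrt ((μ - μold) ⬝ᵥ (Sig⁻¹ *ᵥ (μ - μold)) / ε) - 1))
    (μtil : Fin d → ℝ) (hμtil : μtil = (1 / (1 + ω)) • (μ + ω • μold)) :
    (μtil - μold) ⬝ᵥ (Sig⁻¹ *ᵥ (μtil - μold)) ≤ ε := by
  set q := (μ - μold) ⬝ᵥ (Sig⁻¹ *ᵥ (μ - μold))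
  have hω' : ω = meanProjectionWeight q ε := hω
  have hne : 1 + ω ≠ 0 := by linarith [meanProjectionWeight_nonneg q ε]
  rw [hμtil, one_div_one_add_smul_add_smul_sub hne, smul_dotProduct_mulVec_smul, hω']
  exact sq_one_div_one_add_meanProjectionWeight_mul_le hε

/-- The projected mean always satisfies the trust region constraint. -/
theorem mean_projection_feasible {d : ℕ} (Sig : Matrix (Fin d) (Fin d) ℝ)
    (hSig : Sig.PosDef) (μ μold : Fin d → ℝ) (ε : ℝ) (hε : 0 < ε)
    (ω : ℝ)
    (hω : ω = max 0 (Real.sqrt ((μ - μold) ⬝ᵥ (Sig⁻¹ *ᵥ (μ - μold)) / ε) - 1))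
    (μtil : Fin d → ℝ) (hμtil : μtil = (1 / (1 + ω)) • (μ + ω • μold)) :
    (μtil - μold) ⬝ᵥ (Sig⁻¹ *ᵥ (μtil - μold)) ≤ ε :=
  mean_projection_feasible_general Sig μ μold ε hε ω hω μtil hμtil
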